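/- arXiv:2002.08149 — 8 statements merged into one kernel-verified Lean document; each statement's English description precedes it below -/
import Mathlib

section
/- Let q = 2^m and let f : F_{2^n} → F_{2^n} with n even be defined by f(x) = c·x^{2^m+1} where n = 2m, c ∈ F_{2^m}^*, and Tr_{F_{2^m}/F_2}(c) = 0. Then for every a ∈ F_{2^n}^*, the map x ↦ f(x+a) + f(x) + a·x is a bijection of F_{2^n}. (I.e., f is a planar function in the Zhou sense.) -/
/-!
Write `q = 2 ^ m`. In characteristic 2 the map is `x ↦ L x + c a^(q+1)` with the additive map
`L z = c a z^q + (c a^q + a) z`, so it suffices that `L` has trivial kernel. If `L z = 0` with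
`z ≠ 0`, then `z^(q-1) = (c a^q + a) / (c a)` has norm `z^(q²-1) = 1` down to `𝔽_q`; comparing
norms (using `c ∈ 𝔽_q`) gives `c s² = a^(q+1)` with `s = a^q + a`. Then `s ≠ 0` and `a / s` solves
`Y² + Y = c`, whose roots lie in `𝔽_q` because `Tr(c) = 0`. So `a ∈ 𝔽_q`, i.e. `s = 2a = 0`.
-/

open Finset

theorem charP_two_of_card_eq_two_pow {F : Type*} [Field F] [Fintype F] {k : ℕ}
    (hcard : Fintype.card F = 2 ^ k) : CharP F 2 := by
  have h := FiniteField.cast_card_eq_zero F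
  rw [hcard, Nat.cast_pow, Nat.cast_ofNat] at h
  exact CharTwo.of_one_ne_zero_of_two_eq_zero one_ne_zero (pow_eq_zero_iff'.mp h).1

section CharTwo

variable {R : Type*} [CommRing R] [CharP R 2]

theorem pow_two_pow_eq_add_sum_of_sq_add_self_eq {y c : R} (h : y ^ 2 + y = c) (i : ℕ) :
    y ^ 2 ^ i = y + ∑ j ∈ range i, c ^ 2 ^ j := by
  induction i with
  | zero => simp
  | succ i ih =>
    have hsq : (∑ j ∈ range i, c ^ 2 ^ j) ^ 2 = ∑ j ∈ range i, c ^ 2 ^ (j + 1) := by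
      rw [sum_pow_char]
      exact sum_congr rfl fun j _ => by rw [← pow_mul, pow_succ]
    rw [pow_succ, pow_mul, ih, add_pow_char, hsq, sum_range_succ', pow_zero, pow_one, ← h]
    linear_combination (-y) * CharTwo.two_eq_zero (R := R)

theorem mul_add_pow_two_pow_succ_add_mul_pow_succ (m : ℕ) (a c x : R) :
    c * (x + a) ^ (2 ^ m + 1) + c * x ^ (2 ^ m + 1) + a * x
      = c * a * x ^ 2 ^ m + (c * a ^ 2 ^ m + a) * x + c * a ^ (2 ^ m + 1) := by
  rw [pow_succ, add_pow_char_pow]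
  linear_combination (c * x ^ (2 ^ m + 1)) * CharTwo.two_eq_zero (R := R)

end CharTwo

section FiniteField

variable {F : Type*} [Field F] [Fintype F] {m : ℕ}

theorem pow_two_pow_pow_two_pow (hcard : Fintype.card F = 2 ^ (2 * m)) (x : F) :
    (x ^ 2 ^ m) ^ 2 ^ m = x := by
  rw [← pow_mul, ← pow_add, ← two_mul, ← hcard, FiniteField.pow_card]

variable [CharP F 2]

theorem mul_sq_trace_eq_norm_of_linearized_eq_zero (hcard : Fintype.card F = 2 ^ (2 * m))
    {a c z : F} (hcsub : c ^ 2 ^ m = c) (hz : z ≠ 0)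
    (hL : c * a * z ^ 2 ^ m + (c * a ^ 2 ^ m + a) * z = 0) :
    c * (a ^ 2 ^ m + a) ^ 2 = a ^ (2 ^ m + 1) := by
  have hconj : c * a ^ 2 ^ m * z = (c * a + a ^ 2 ^ m) * z ^ 2 ^ m := by
    have := congrArg (· ^ 2 ^ m) (CharTwo.add_eq_zero.mp hL)
    simpa only [add_pow_char_pow, mul_pow, hcsub, pow_two_pow_pow_two_pow hcard] using this
  have hnorm : (c * a * (c * a ^ 2 ^ m)) * (z * z ^ 2 ^ m)
      = ((c * a ^ 2 ^ m + a) * (c * a + a ^ 2 ^ m)) * (z * z ^ 2 ^ m) := by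
    linear_combination (c * a ^ 2 ^ m * z) * CharTwo.add_eq_zero.mp hL
      + ((c * a ^ 2 ^ m + a) * z) * hconj
  have := mul_right_cancel₀ (mul_ne_zero hz (pow_ne_zero _ hz)) hnorm
  linear_combination -this + (c - 1) * a * a ^ 2 ^ m * CharTwo.two_eq_zero (R := F)

theorem eq_zero_of_mul_sq_trace_eq_norm (hcard : Fintype.card F = 2 ^ (2 * m)) {a c : F}
    (htr : ∑ i ∈ range m, c ^ 2 ^ i = 0) (h : c * (a ^ 2 ^ m + a) ^ 2 = a ^ (2 ^ m + 1)) :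
    a = 0 := by
  set s := a ^ 2 ^ m + a with hs
  by_cases hs0 : s = 0
  · rw [hs0, zero_pow two_ne_zero, mul_zero, eq_comm] at h
    exact (pow_eq_zero_iff (Nat.succ_ne_zero _)).mp h
  have hy : (a / s) ^ 2 + a / s = c := by
    field_simp
    linear_combination -h + a ^ 2 * CharTwo.two_eq_zero (R := F)
  have hsq : s ^ 2 ^ m = s := by
    rw [hs, add_pow_char_pow, pow_two_pow_pow_two_pow hcard, add_comm]
  have hyq : (a / s) ^ 2 ^ m = a / s := by
    rw [pow_two_pow_eq_add_sum_of_sq_add_self_eq hy, htr, add_zero]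
  have haq : a ^ 2 ^ m = a := by
    rwa [div_pow, hsq, div_left_inj' hs0] at hyq
  exact absurd (by rw [hs, haq, CharTwo.add_self_eq_zero]) hs0

end FiniteField

theorem stmt_0_general (m : ℕ) (F : Type*) [Field F] [Fintype F]
    (hcard : Fintype.card F = 2 ^ (2 * m)) (c : F)
    (hcsub : c ^ (2 ^ m) = c)
    (htr : ∑ i ∈ Finset.range m, c ^ (2 ^ i) = 0) :
    ∀ a : F, a ≠ 0 →
      Function.Bijective
        (fun x : F => c * (x + a) ^ (2 ^ m + 1) + c * x ^ (2 ^ m + 1) + a * x) := by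
  have := charP_two_of_card_eq_two_pow hcard
  intro a ha
  rw [← Finite.injective_iff_bijective]
  intro x y hxy
  simp only [mul_add_pow_two_pow_succ_add_mul_pow_succ, add_left_inj] at hxy
  have hL : c * a * (x - y) ^ 2 ^ m + (c * a ^ 2 ^ m + a) * (x - y) = 0 := by
    rw [sub_pow_char_pow]
    linear_combination hxy
  by_contra hne
  exact ha (eq_zero_of_mul_sq_trace_eq_norm hcard htr
    (mul_sq_trace_eq_norm_of_linearized_eq_zero hcard hcsub (sub_ne_zero.mpr hne) hL))

/-- Zhou-planarity of f(x) = c·x^{2^m+1} over F_{2^{2m}} when c ∈ F_{2^m}^*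
with absolute trace zero. -/
theorem stmt_0 (m : ℕ) (hm : 0 < m) (F : Type*) [Field F] [Fintype F]
    (hcard : Fintype.card F = 2 ^ (2 * m)) (c : F) (hc0 : c ≠ 0)
    (hcsub : c ^ (2 ^ m) = c)
    (htr : ∑ i ∈ Finset.range m, c ^ (2 ^ i) = 0) :
    ∀ a : F, a ≠ 0 →
      Function.Bijective
        (fun x : F => c * (x + a) ^ (2 ^ m + 1) + c * x ^ (2 ^ m + 1) + a * x) :=
  stmt_0_general m F hcard c hcsub htr
end

section
/- Let q = 2^m. For s ∈ F_{q^2} with s^{q+1} ≠ 1, let a = s^q/(1 + s^{q+1}). Then Tr_{F_q/F_2}(a^{q+1}) = 0. -/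
/-!
Write `φ y = y ^ q` and `N = s ^ (q + 1) = s * φ s`. Since `φ` is an involution of `F_{q^2}`, both `N`
and `x = N / (1 + N)` lie in `F_q`, and `a ^ (q + 1) = a * φ a = N / (1 + N) ^ 2 = x + x ^ 2`. In
characteristic two the trace of an Artin–Schreier element `x + x ^ 2` telescopes to `x ^ q + x = 0`.
-/

open Finset

theorem CharTwo.sum_range_add_sq_pow_two_pow {R : Type*} [CommRing R] [CharP R 2] (x : R) (m : ℕ) :
    ∑ i ∈ range m, (x + x ^ 2) ^ 2 ^ i = x ^ 2 ^ m + x := by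
  have hterm : ∀ i ∈ range m, (x + x ^ 2) ^ 2 ^ i = x ^ 2 ^ (i + 1) - x ^ 2 ^ i := fun i _ => by
    rw [add_pow_char_pow, ← pow_mul, ← pow_succ', CharTwo.sub_eq_add, add_comm]
  rw [sum_congr rfl hterm, sum_range_sub (fun i => x ^ 2 ^ i), pow_zero, pow_one,
    CharTwo.sub_eq_add]

theorem CharTwo.div_one_add_add_sq {F : Type*} [Field F] [CharP F 2] (N : F) :
    N / (1 + N) + (N / (1 + N)) ^ 2 = N / (1 + N) ^ 2 := by
  rcases eq_or_ne (1 + N) 0 with h | h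
  · simp [h]
  · field_simp
    linear_combination N ^ 2 * CharTwo.two_eq_zero (R := F)

theorem mul_map_div_one_add_mul_map {F : Type*} [Field F] (φ : F →+* F)
    (hφ : Function.Involutive φ) (s : F) :
    φ s / (1 + s * φ s) * φ (φ s / (1 + s * φ s)) = s * φ s / (1 + s * φ s) ^ 2 := by
  rw [map_div₀, map_add, map_one, map_mul, hφ s, mul_comm (φ s) s, div_mul_div_comm, mul_comm (φ s),
    sq]

theorem stmt_2_general (m : ℕ) (F : Type*) [Field F] [Fintype F]
    (hcard : Fintype.card F = 2 ^ (2 * m)) (s : F) (a : F)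
    (ha : a = s ^ (2 ^ m) / (1 + s ^ (2 ^ m + 1))) :
    ∑ i ∈ Finset.range m, (a ^ (2 ^ m + 1)) ^ (2 ^ i) = 0 := by
  have : CharP F 2 := charP_of_card_eq_prime_pow hcard
  set φ := iterateFrobenius F 2 m
  have hφ : ∀ y, φ y = y ^ 2 ^ m := fun y => iterateFrobenius_def ..
  have hinv : Function.Involutive φ := fun y => by
    rw [hφ, hφ, ← pow_mul, ← pow_add, ← two_mul, ← hcard, FiniteField.pow_card]
  set N := s * φ s
  have hN : φ N = N := by rw [map_mul, hinv s, mul_comm]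
  have hx : (N / (1 + N)) ^ 2 ^ m = N / (1 + N) := by
    rw [← hφ, map_div₀, map_add, map_one, hN]
  have haq : a ^ (2 ^ m + 1) = N / (1 + N) + (N / (1 + N)) ^ 2 := by
    rw [CharTwo.div_one_add_add_sq, ← mul_map_div_one_add_mul_map φ hinv, pow_succ', ← hφ, ha,
      pow_succ', ← hφ]
  rw [haq, CharTwo.sum_range_add_sq_pow_two_pow, hx, CharTwo.add_self_eq_zero]

/-- If s ∈ F_{q^2} with s^{q+1} ≠ 1 and a = s^q/(1+s^{q+1}),
then Tr_{F_q/F_2}(a^{q+1}) = 0. -/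
theorem stmt_2 (m : ℕ) (hm : 0 < m) (F : Type*) [Field F] [Fintype F]
    (hcard : Fintype.card F = 2 ^ (2 * m)) (s : F)
    (hs : s ^ (2 ^ m + 1) ≠ 1) (a : F)
    (ha : a = s ^ (2 ^ m) / (1 + s ^ (2 ^ m + 1))) :
    ∑ i ∈ Finset.range m, (a ^ (2 ^ m + 1)) ^ (2 ^ i) = 0 :=
  stmt_2_general m F hcard s a ha
end

section
/- Let q = 2^m and let μ_{q+1} = {δ ∈ F_{q^2} : δ^{q+1} = 1}. Then the map φ : F_{q^2}^* \ μ_{q+1} → F_{q^2}, φ(s) = s^q/(1 + s^{q+1}), is 2-to-1; more precisely, for s, t in the domain, φ(s) = φ(t) if and only if t = s or t = 1/s^q, and these two values are always distinct. -/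
/-!
Write `σ` for the Frobenius `x ↦ x ^ q`, an involution of `F_{q²}`, and `N s = s σ(s)`, so that
`φ(s) = σ(s) / (1 + N s)`. Clearing denominators in `φ(s) = φ(t)` gives
`σ(s - t) = σ(s) σ(t) (s - t)`; applying `σ` once more yields `s - t = N s N t (s - t)`, so
`t ≠ s` forces `N s N t = 1`, and then `φ(s) = φ(t)` collapses to `s σ(t) = 1`, i.e. `t = σ(s)⁻¹`.
Characteristic `2` enters only to turn `N s ≠ 1` into `1 + N s ≠ 0`.
-/

namespace RingHom

variable {F : Type*} [Field F] (σ : F →+* F)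

/-- For the `q`-Frobenius `σ` of `F_{q²}` this is the map `φ(s) = s^q / (1 + s^{q+1})`. -/
def normQuot (s : F) : F := σ s / (1 + s * σ s)

variable {σ} (hσ : Function.Involutive σ)
include hσ

theorem eq_inv_apply_of_normQuot_eq {s t : F} (hs : 1 + s * σ s ≠ 0) (ht : 1 + t * σ t ≠ 0)
    (hst : t ≠ s) (h : σ.normQuot s = σ.normQuot t) : t = (σ s)⁻¹ := by
  rw [normQuot, normQuot, div_eq_div_iff hs ht] at h
  have hσdiff : σ (s - t) = σ s * σ t * (s - t) := by
    rw [map_sub]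
    linear_combination h
  have hnorm_mul : s * σ s * (t * σ t) = 1 := by
    have hdiff : s - t = s * σ s * (t * σ t) * (s - t) := by
      calc s - t = σ (σ (s - t)) := (hσ _).symm
        _ = s * σ s * (t * σ t) * (s - t) := by
          rw [hσdiff, map_mul, map_mul, hσ, hσ, hσdiff]
          ring
    exact (mul_eq_right₀ (sub_ne_zero.mpr hst.symm)).mp hdiff.symm
  have hsσt : s * σ t = 1 := by
    refine mul_right_cancel₀ hs ?_
    linear_combination -s * h + hnorm_mul
  rw [← hσ t, eq_inv_of_mul_eq_one_right hsσt, map_inv₀]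

theorem normQuot_inv_apply {s : F} (hs : s ≠ 0) : σ.normQuot (σ s)⁻¹ = σ.normQuot s := by
  have hσs : σ s ≠ 0 := (map_ne_zero σ).mpr hs
  have hden : 1 + (σ s)⁻¹ * s⁻¹ = (1 + s * σ s) / (s * σ s) := by
    field_simp
    ring
  rw [normQuot, normQuot, map_inv₀, hσ, hden, div_div_eq_mul_div, inv_mul_cancel_left₀ hs]

theorem normQuot_eq_normQuot_iff {s t : F} (hs0 : s ≠ 0) (hs : 1 + s * σ s ≠ 0)
    (ht : 1 + t * σ t ≠ 0) : σ.normQuot s = σ.normQuot t ↔ t = s ∨ t = (σ s)⁻¹ := by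
  refine ⟨fun h => or_iff_not_imp_left.mpr fun hst => eq_inv_apply_of_normQuot_eq hσ hs ht hst h,
    ?_⟩
  rintro (rfl | rfl)
  · rfl
  · exact (normQuot_inv_apply hσ hs0).symm

end RingHom

theorem FiniteField.pow_pow_eq_self_of_card_eq_sq {F : Type*} [Field F] [Fintype F] {k : ℕ}
    (hcard : Fintype.card F = k ^ 2) (a : F) : (a ^ k) ^ k = a := by
  rw [← pow_mul, ← sq, ← hcard, FiniteField.pow_card]

theorem stmt_5_general (m : ℕ) (hm : 0 < m) (F : Type*) [Field F] [Fintype F]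
    (hcard : Fintype.card F = 2 ^ (2 * m)) (s t : F)
    (hs0 : s ≠ 0) (hs1 : s ^ (2 ^ m + 1) ≠ 1)
    (ht1 : t ^ (2 ^ m + 1) ≠ 1) :
    (s ^ (2 ^ m) / (1 + s ^ (2 ^ m + 1)) = t ^ (2 ^ m) / (1 + t ^ (2 ^ m + 1)) ↔
      t = s ∨ t = (s ^ (2 ^ m))⁻¹) ∧ s ≠ (s ^ (2 ^ m))⁻¹ := by
  have : CharP F 2 := ringChar.of_eq <| FiniteField.even_card_iff_char_two.mpr <| by
    rw [hcard, Nat.pow_mod]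
    simp [hm.ne']
  set σ := iterateFrobenius F 2 m
  have hσ : Function.Involutive σ := FiniteField.pow_pow_eq_self_of_card_eq_sq <| by
    rw [hcard, pow_mul, pow_right_comm]
  have hnorm (a : F) : a ^ (2 ^ m + 1) = a * σ a := by
    rw [pow_succ', iterateFrobenius_def]
  have hunit (a : F) (ha : a ^ (2 ^ m + 1) ≠ 1) : 1 + a * σ a ≠ 0 := by
    rwa [Ne, CharTwo.add_eq_zero, eq_comm, ← hnorm]
  have hσs : σ s ≠ 0 := (map_ne_zero σ).mpr hs0
  rw [hnorm, hnorm]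
  exact ⟨RingHom.normQuot_eq_normQuot_iff hσ hs0 (hunit s hs1) (hunit t ht1),
    (mul_eq_one_iff_eq_inv₀ hσs).not.mp (hnorm s ▸ hs1)⟩

/-- φ(s) = s^q/(1+s^{q+1}) is 2-to-1 on F_{q^2}^* \ μ_{q+1}, with fibers {s, 1/s^q}. -/
theorem stmt_5 (m : ℕ) (hm : 0 < m) (F : Type*) [Field F] [Fintype F]
    (hcard : Fintype.card F = 2 ^ (2 * m)) (s t : F)
    (hs0 : s ≠ 0) (hs1 : s ^ (2 ^ m + 1) ≠ 1)
    (ht0 : t ≠ 0) (ht1 : t ^ (2 ^ m + 1) ≠ 1) :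
    (s ^ (2 ^ m) / (1 + s ^ (2 ^ m + 1)) = t ^ (2 ^ m) / (1 + t ^ (2 ^ m + 1)) ↔
      t = s ∨ t = (s ^ (2 ^ m))⁻¹) ∧ s ≠ (s ^ (2 ^ m))⁻¹ :=
  stmt_5_general m hm F hcard s t hs0 hs1 ht1
end

section
/- Let q = 2^m. The set N = {a ∈ F_{q^2} : ∃ s ∈ F_{q^2}, s^{q+1} ≠ 1, a = s^q/(1 + s^{q+1})} has cardinality (q^2 − q)/2. -/
/-! Let σ x = x^q, an involutive automorphism of F_{q²}, and f s = σ s / (1 + σ s · s).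
Then f ((σ s)⁻¹) = f s, and conversely f t = f s forces t ∈ {s, (σ s)⁻¹}: clearing denominators
and applying σ yields two relations which combine to (s − t)(σ s · σ t · s t − 1) = 0. The two
preimages coincide only when σ s · s = 1, so on the q² − (q + 1) elements with s^{q+1} ≠ 1 the
map f is 2-to-1 away from its single zero s = 0 and takes (q² − q)/2 values. The q + 1 solutions
of s^{q+1} = 1 exist because q + 1 divides q² − 1, the order of the cyclic group F^×. -/

open Finset

theorem FiniteField.exists_isPrimitiveRoot_of_dvd {F : Type*} [Field F] [Fintype F] {n : ℕ}
    (hn : n ∣ Fintype.card F - 1) : ∃ ζ : F, IsPrimitiveRoot ζ n := by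
  classical
  obtain ⟨g, hg⟩ := IsCyclic.exists_generator (α := Fˣ)
  have hg' : IsPrimitiveRoot (g : F) (Fintype.card F - 1) := by
    rw [← Fintype.card_units, ← Nat.card_eq_fintype_card,
      ← orderOf_eq_card_of_forall_mem_zpowers hg]
    exact IsPrimitiveRoot.coe_units_iff.mpr (IsPrimitiveRoot.orderOf g)
  obtain ⟨k, hk⟩ := hn
  have hpos : 0 < Fintype.card F - 1 := by have := Fintype.one_lt_card (α := F); omega
  exact ⟨g ^ k, hg'.pow hpos (by rw [hk, mul_comm])⟩

theorem FiniteField.card_filter_pow_eq_one_of_dvd {F : Type*} [Field F] [Fintype F]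
    [DecidableEq F] {n : ℕ} (hn0 : 0 < n) (hn : n ∣ Fintype.card F - 1) :
    #{x : F | x ^ n = 1} = n := by
  obtain ⟨ζ, hζ⟩ := exists_isPrimitiveRoot_of_dvd hn
  calc #{x : F | x ^ n = 1} = #(Polynomial.nthRootsFinset n (1 : F)) := by
        congr 1; ext x; simp [Polynomial.mem_nthRootsFinset hn0]
    _ = n := hζ.card_nthRootsFinset

theorem Finset.two_mul_card_image_eq_card_add_one {α β : Type*} [DecidableEq β] {s : Finset α}
    {f : α → β} {a : α} (ha : a ∈ s) (hfa : ∀ x ∈ s, f x = f a → x = a)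
    (hfib : ∀ x ∈ s, x ≠ a → #{y ∈ s | f y = f x} = 2) :
    2 * #(s.image f) = #s + 1 := by
  have hfa' : f a ∈ s.image f := mem_image_of_mem f ha
  have hfib_a : #{y ∈ s | f y = f a} = 1 :=
    card_eq_one.mpr ⟨a, by ext y; simp only [mem_filter, mem_singleton]; grind⟩
  have hfib' : ∀ b ∈ (s.image f).erase (f a), #{y ∈ s | f y = b} = 2 := by
    intro b hb
    obtain ⟨hba, hb⟩ := mem_erase.mp hb
    obtain ⟨x, hx, rfl⟩ := mem_image.mp hb
    exact hfib x hx (by rintro rfl; exact hba rfl)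
  have hsum := card_eq_sum_card_image f s
  rw [← insert_erase hfa', sum_insert (notMem_erase _ _), hfib_a, sum_const_nat hfib',
    card_erase_of_mem hfa'] at hsum
  have := card_pos.mpr ⟨_, hfa'⟩
  rw [hsum]
  omega

section ConjQuot

variable {F : Type*} [Field F] (σ : F →+* F)

/-- For σ the Frobenius x ↦ x^q this is the paper's map s ↦ s^q / (1 + s^{q+1}). -/
def conjQuot (s : F) : F := σ s / (1 + σ s * s)

variable {σ}

theorem conjQuot_eq_zero_iff {s : F} (hs : 1 + σ s * s ≠ 0) : conjQuot σ s = 0 ↔ s = 0 := by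
  rw [conjQuot, div_eq_zero_iff, or_iff_left hs, map_eq_zero]

theorem apply_inv_apply_mul_inv (hσ : Function.Involutive σ) (s : F) :
    σ (σ s)⁻¹ * (σ s)⁻¹ = (σ s * s)⁻¹ := by
  rw [map_inv₀, hσ, mul_inv, mul_comm]

theorem conjQuot_inv_apply (hσ : Function.Involutive σ) (s : F) :
    conjQuot σ (σ s)⁻¹ = conjQuot σ s := by
  rcases eq_or_ne s 0 with rfl | hs
  · simp
  have hσs : σ s ≠ 0 := (map_ne_zero σ).mpr hs
  rw [conjQuot, conjQuot, apply_inv_apply_mul_inv hσ, map_inv₀, hσ,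
    show 1 + (σ s * s)⁻¹ = (1 + σ s * s) / (σ s * s) by field_simp; ring,
    div_div_eq_mul_div, mul_comm (σ s) s, ← mul_assoc, inv_mul_cancel₀ hs, one_mul]

theorem eq_or_eq_inv_of_conjQuot_eq (hσ : Function.Involutive σ) {s t : F}
    (hs : 1 + σ s * s ≠ 0) (ht : 1 + σ t * t ≠ 0) (h : conjQuot σ t = conjQuot σ s) :
    t = s ∨ t = (σ s)⁻¹ := by
  have E1 : σ t * (1 + σ s * s) = σ s * (1 + σ t * t) := (div_eq_div_iff ht hs).mp h
  have E2 : t * (1 + s * σ s) = s * (1 + t * σ t) := by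
    simpa only [map_mul, map_add, map_one, hσ _] using congrArg σ E1
  refine (eq_or_ne t s).imp id fun hts => ?_
  have hnorm : σ s * σ t * s * t = 1 := by
    have : (s - t) * (σ s * σ t * s * t - 1) = 0 := by linear_combination s * t * E1 + E2
    exact sub_eq_zero.mp ((mul_eq_zero.mp this).resolve_left (sub_ne_zero.mpr hts.symm))
  have : (σ t * s - 1) * (1 + σ s * s) = 0 := by linear_combination s * E1 + hnorm
  have hts : σ t * s = 1 := sub_eq_zero.mp ((mul_eq_zero.mp this).resolve_right hs)
  rw [← hσ t, eq_inv_of_mul_eq_one_left hts, map_inv₀]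

variable [Fintype F] [DecidableEq F]

variable (σ) in
def normNeOne : Finset F := {s | σ s * s ≠ 1}

theorem card_normNeOne_add_card_filter :
    #(normNeOne σ) + #{s : F | σ s * s = 1} = Fintype.card F := by
  rw [add_comm]
  exact card_filter_add_card_filter_not _

theorem one_add_ne_zero_of_mem_normNeOne [CharP F 2] {s : F} (hs : s ∈ normNeOne σ) :
    1 + σ s * s ≠ 0 := by
  rw [Ne, CharTwo.add_eq_zero, eq_comm]
  exact (mem_filter.mp hs).2

theorem inv_apply_mem_normNeOne (hσ : Function.Involutive σ) {s : F} (hs : s ∈ normNeOne σ) :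
    (σ s)⁻¹ ∈ normNeOne σ := by
  simpa only [normNeOne, mem_filter, mem_univ, true_and, apply_inv_apply_mul_inv hσ, Ne,
    inv_eq_one] using hs

theorem card_filter_conjQuot_eq_two [CharP F 2] (hσ : Function.Involutive σ) {s : F}
    (hs : s ∈ normNeOne σ) (hs0 : s ≠ 0) :
    #{t ∈ normNeOne σ | conjQuot σ t = conjQuot σ s} = 2 := by
  have hne : s ≠ (σ s)⁻¹ := by
    intro h
    apply (mem_filter.mp hs).2
    nth_rewrite 2 [h]
    exact mul_inv_cancel₀ ((map_ne_zero σ).mpr hs0)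
  rw [← card_pair hne]
  congr 1
  ext t
  simp only [mem_filter, mem_insert, mem_singleton]
  constructor
  · rintro ⟨ht, h⟩
    exact eq_or_eq_inv_of_conjQuot_eq hσ (one_add_ne_zero_of_mem_normNeOne hs)
      (one_add_ne_zero_of_mem_normNeOne ht) h
  · rintro (rfl | rfl)
    · exact ⟨hs, rfl⟩
    · exact ⟨inv_apply_mem_normNeOne hσ hs, conjQuot_inv_apply hσ s⟩

theorem two_mul_card_image_conjQuot [CharP F 2] (hσ : Function.Involutive σ) :
    2 * #((normNeOne σ).image (conjQuot σ)) = #(normNeOne σ) + 1 := by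
  have h0 : (0 : F) ∈ normNeOne σ := by simp [normNeOne]
  refine two_mul_card_image_eq_card_add_one h0 (fun s hs h => ?_)
    (fun s hs hs0 => card_filter_conjQuot_eq_two hσ hs hs0)
  rwa [show conjQuot σ 0 = 0 by simp [conjQuot], conjQuot_eq_zero_iff
    (one_add_ne_zero_of_mem_normNeOne hs)] at h

end ConjQuot

theorem stmt_6_general (m : ℕ) (F : Type*) [Field F] [Fintype F]
    (hcard : Fintype.card F = 2 ^ (2 * m)) :
    {a : F | ∃ s : F, s ^ (2 ^ m + 1) ≠ 1 ∧
      a = s ^ (2 ^ m) / (1 + s ^ (2 ^ m + 1))}.ncard =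
      ((2 ^ m) ^ 2 - 2 ^ m) / 2 := by
  classical
  have : Fact (Nat.Prime 2) := ⟨Nat.prime_two⟩
  have : CharP F 2 := charP_of_card_eq_prime_pow hcard
  set q := 2 ^ m
  have hcardq : Fintype.card F = q ^ 2 := by rw [hcard, pow_mul']
  let σ := iterateFrobenius F 2 m
  have hσ_apply (s : F) : σ s = s ^ q := iterateFrobenius_def ..
  have hσ : Function.Involutive σ := fun x => by
    rw [hσ_apply, hσ_apply, ← pow_mul, ← sq, ← hcardq, FiniteField.pow_card]
  have hset : {a : F | ∃ s : F, s ^ (q + 1) ≠ 1 ∧ a = s ^ q / (1 + s ^ (q + 1))} =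
      (normNeOne σ).image (conjQuot σ) := by
    ext a
    simp [normNeOne, conjQuot, hσ_apply, pow_succ, eq_comm]
  have hroots : #{s : F | σ s * s = 1} = q + 1 := by
    simp only [hσ_apply, ← pow_succ]
    refine FiniteField.card_filter_pow_eq_one_of_dvd q.succ_pos ⟨q - 1, ?_⟩
    rw [hcardq, ← one_pow 2, Nat.sq_sub_sq, one_pow]
  have hsplit := card_normNeOne_add_card_filter (σ := σ)
  have hcount := two_mul_card_image_conjQuot hσ
  rw [hcardq, hroots] at hsplit
  rw [hset, Set.ncard_coe_finset]
  omega

/-- The set N = {s^q/(1+s^{q+1}) : s^{q+1} ≠ 1} has (q²−q)/2 elements. -/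
theorem stmt_6 (m : ℕ) (hm : 0 < m) (F : Type*) [Field F] [Fintype F]
    (hcard : Fintype.card F = 2 ^ (2 * m)) :
    {a : F | ∃ s : F, s ^ (2 ^ m + 1) ≠ 1 ∧
      a = s ^ (2 ^ m) / (1 + s ^ (2 ^ m + 1))}.ncard =
      ((2 ^ m) ^ 2 - 2 ^ m) / 2 :=
  stmt_6_general m F hcard
end

section
/- Let q = 2^m and s ∈ F_{q^3} with s^{1+q+q^2} ≠ 1. Set a = s^{q+q^2}/(1 + s^{1+q+q^2}) and c = s^{q^2}/(1 + s^{1+q+q^2}). Then for every ε ∈ F_{q^3}^*, ε^{q^2+q+1} + Tr_{F_{q^3}/F_q}(ε^q·(c·ε + (a·ε)^{q^2})^2) ≠ 0. -/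
/-!
Write `σ x = x ^ q`, an automorphism of order 3, and `N x = x σx σ²x`. With `d = 1 + N s`
one has `a = σs σ²s / d` and `c = σ²s / d`, and in characteristic 2 the whole expression
factors as `N(ε + s² σε) / d²`. A zero of `ε + s² σε` with `ε ≠ 0` would give
`N ε = N(s)² N ε`, i.e. `N(s)² = 1`, hence `N s = 1` since squaring is injective in
characteristic 2.
-/

section CubicAutomorphism

variable {F : Type*} [Field F] (σ : F →+* F)

def cubicNorm (x : F) : F := x * σ x * σ (σ x)

def cubicTrace (x : F) : F := x + σ x + σ (σ x)

variable {σ}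

lemma cubicNorm_ne_zero {x : F} (hx : x ≠ 0) : cubicNorm σ x ≠ 0 := by
  simp [cubicNorm, hx]

lemma cubicNorm_mul (x y : F) : cubicNorm σ (x * y) = cubicNorm σ x * cubicNorm σ y := by
  simp only [cubicNorm, map_mul]; ring

lemma cubicNorm_pow (x : F) (n : ℕ) : cubicNorm σ (x ^ n) = cubicNorm σ x ^ n := by
  simp only [cubicNorm, map_pow]; ring

lemma cubicNorm_map (hσ : ∀ x, σ (σ (σ x)) = x) (x : F) : cubicNorm σ (σ x) = cubicNorm σ x := by
  simp only [cubicNorm, hσ]; ring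

lemma cubicNorm_eq_one_of_eq_mul_map (hσ : ∀ x, σ (σ (σ x)) = x) {x t : F} (hx : x ≠ 0)
    (h : x = t * σ x) : cubicNorm σ t = 1 := by
  have hN : cubicNorm σ x = cubicNorm σ t * cubicNorm σ x := by
    conv_lhs => rw [h, cubicNorm_mul, cubicNorm_map hσ]
  exact (mul_eq_right₀ (cubicNorm_ne_zero hx)).mp hN.symm

variable [CharP F 2]

lemma add_sq_mul_map_ne_zero (hσ : ∀ x, σ (σ (σ x)) = x) {s ε : F} (hs : cubicNorm σ s ≠ 1)
    (hε : ε ≠ 0) : ε + s ^ 2 * σ ε ≠ 0 := by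
  intro h
  have hs2 := cubicNorm_eq_one_of_eq_mul_map hσ hε (CharTwo.add_eq_zero.mp h)
  rw [cubicNorm_pow, ← one_pow 2] at hs2
  exact hs (CharTwo.sq_injective hs2)

theorem cubicNorm_add_cubicTrace_eq (hσ : ∀ x, σ (σ (σ x)) = x) {s a c : F}
    (hd : 1 + cubicNorm σ s ≠ 0) (ha : a = σ s * σ (σ s) / (1 + cubicNorm σ s))
    (hc : c = σ (σ s) / (1 + cubicNorm σ s)) (ε : F) :
    cubicNorm σ ε + cubicTrace σ (σ ε * (c * ε + σ (σ (a * ε))) ^ 2) =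
      cubicNorm σ (ε + s ^ 2 * σ ε) / (1 + cubicNorm σ s) ^ 2 := by
  have hσd : σ (1 + cubicNorm σ s) = 1 + cubicNorm σ s := by
    simp only [cubicNorm, map_add, map_one, map_mul, hσ]; ring
  subst ha hc
  generalize hd_def : 1 + cubicNorm σ s = d at hd hσd
  simp only [cubicTrace, cubicNorm, map_add, map_mul, map_div₀, map_pow, hσd, hσ] at hd_def ⊢
  field_simp
  -- `d² = (1 + N s)²`, and the leftover cross terms are multiples of 2
  linear_combination (-(ε * σ ε * σ (σ ε)) * (d + 1 + s * σ s * σ (σ s))) * hd_def +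
    (4 * ε * σ ε * σ (σ ε) * s * σ s * σ (σ s)) * CharTwo.two_eq_zero (R := F)

end CubicAutomorphism

theorem stmt_11_general (m : ℕ) (F : Type*) [Field F] [Fintype F]
    (hcard : Fintype.card F = 2 ^ (3 * m)) (s : F)
    (hs : s ^ (1 + 2 ^ m + (2 ^ m) ^ 2) ≠ 1) (a c : F)
    (ha : a = s ^ (2 ^ m + (2 ^ m) ^ 2) / (1 + s ^ (1 + 2 ^ m + (2 ^ m) ^ 2)))
    (hc : c = s ^ ((2 ^ m) ^ 2) / (1 + s ^ (1 + 2 ^ m + (2 ^ m) ^ 2))) :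
    ∀ ε : F, ε ≠ 0 →
      ε ^ ((2 ^ m) ^ 2 + 2 ^ m + 1) +
        ((ε ^ (2 ^ m) * (c * ε + (a * ε) ^ ((2 ^ m) ^ 2)) ^ 2) +
          (ε ^ (2 ^ m) * (c * ε + (a * ε) ^ ((2 ^ m) ^ 2)) ^ 2) ^ (2 ^ m) +
          (ε ^ (2 ^ m) * (c * ε + (a * ε) ^ ((2 ^ m) ^ 2)) ^ 2) ^ ((2 ^ m) ^ 2)) ≠ 0 := by
  intro ε hε
  have : Fact (Nat.Prime 2) := ⟨Nat.prime_two⟩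
  have : CharP F 2 := charP_of_card_eq_prime_pow hcard
  set σ := iterateFrobenius F 2 m
  have hσ1 (x : F) : x ^ 2 ^ m = σ x := rfl
  have hσ2 (x : F) : x ^ (2 ^ m) ^ 2 = σ (σ x) := by rw [sq, pow_mul]; rfl
  have hσ3 (x : F) : σ (σ (σ x)) = x := by
    rw [← hσ1, ← hσ2, ← pow_mul, ← pow_succ, ← pow_mul, mul_comm, ← hcard]
    exact FiniteField.pow_card x
  have hN (x : F) : x ^ (1 + 2 ^ m + (2 ^ m) ^ 2) = cubicNorm σ x := by
    rw [pow_add, pow_add, pow_one, hσ1, hσ2]; rfl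
  rw [hN] at hs
  rw [hN, pow_add, hσ1, hσ2] at ha
  rw [hN, hσ2] at hc
  rw [show (2 ^ m) ^ 2 + 2 ^ m + 1 = 1 + 2 ^ m + (2 ^ m) ^ 2 by ring, hN, hσ2, hσ1, hσ2, hσ1]
  have hd : 1 + cubicNorm σ s ≠ 0 := fun h ↦ hs (CharTwo.add_eq_zero.mp h).symm
  change cubicNorm σ ε + cubicTrace σ (σ ε * (c * ε + σ (σ (a * ε))) ^ 2) ≠ 0
  rw [cubicNorm_add_cubicTrace_eq hσ3 hd ha hc]
  exact div_ne_zero (cubicNorm_ne_zero (add_sq_mul_map_ne_zero hσ3 hs hε)) (pow_ne_zero 2 hd)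

/-- The nonvanishing condition equivalent to planarity of
P(x) = a x^{q+1} + c x^{q^2+1} over F_{q^3}. -/
theorem stmt_11 (m : ℕ) (hm : 0 < m) (F : Type*) [Field F] [Fintype F]
    (hcard : Fintype.card F = 2 ^ (3 * m)) (s : F)
    (hs : s ^ (1 + 2 ^ m + (2 ^ m) ^ 2) ≠ 1) (a c : F)
    (ha : a = s ^ (2 ^ m + (2 ^ m) ^ 2) / (1 + s ^ (1 + 2 ^ m + (2 ^ m) ^ 2)))
    (hc : c = s ^ ((2 ^ m) ^ 2) / (1 + s ^ (1 + 2 ^ m + (2 ^ m) ^ 2))) :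
    ∀ ε : F, ε ≠ 0 →
      ε ^ ((2 ^ m) ^ 2 + 2 ^ m + 1) +
        ((ε ^ (2 ^ m) * (c * ε + (a * ε) ^ ((2 ^ m) ^ 2)) ^ 2) +
          (ε ^ (2 ^ m) * (c * ε + (a * ε) ^ ((2 ^ m) ^ 2)) ^ 2) ^ (2 ^ m) +
          (ε ^ (2 ^ m) * (c * ε + (a * ε) ^ ((2 ^ m) ^ 2)) ^ 2) ^ ((2 ^ m) ^ 2)) ≠ 0 :=
  stmt_11_general m F hcard s hs a c ha hc
end

section
/- Let F be a finite field of characteristic 2, n ≥ 1, and let P : F_{2^n} → F_{2^n} be a quadratic planar function (i.e., P is a sum of monomials c·x^{2^i+2^j} and x ↦ P(x+a)+P(x)+ax is bijective for all a ≠ 0). Define x * y = xy + P(x+y) + P(x) + P(y). Then (F_{2^n}, +, *) has no zero divisors: x * y = 0 implies x = 0 or y = 0. -/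
/-!
In characteristic 2 the equation x * y = 0 reads D_y(x) = P(y), where D_y(x) = P(x + y) + P(x) + yx.
Since P has no constant term, P(y) = D_y(0), so injectivity of the planar map D_y for y ≠ 0
forces x = 0.
-/

open CharTwo in
theorem eq_zero_or_eq_zero_of_planar {R : Type*} [CommRing R] [CharP R 2] {P : R → R}
    (hP0 : P 0 = 0)
    (hplanar : ∀ a : R, a ≠ 0 → Function.Injective (fun x : R => P (x + a) + P x + a * x))
    {x y : R} (h : x * y + P (x + y) + P x + P y = 0) : x = 0 ∨ y = 0 := by
  by_cases hy : y = 0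
  · exact Or.inr hy
  refine Or.inl (hplanar y hy ?_)
  show P (x + y) + P x + y * x = P (0 + y) + P 0 + y * 0
  rw [zero_add, hP0, mul_zero, add_zero, add_zero]
  linear_combination h - P y * two_eq_zero (R := R)

theorem stmt_17_general (n : ℕ) (F : Type*) [Field F] [Fintype F]
    (hcard : Fintype.card F = 2 ^ n) (P : F → F)
    (hquad : ∃ c : ℕ → ℕ → F, ∀ x : F,
      P x = ∑ i ∈ Finset.range n, ∑ j ∈ Finset.range n, c i j * x ^ (2 ^ i + 2 ^ j))
    (hplanar : ∀ a : F, a ≠ 0 →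
      Function.Bijective (fun x : F => P (x + a) + P x + a * x)) :
    ∀ x y : F, x * y + P (x + y) + P x + P y = 0 → x = 0 ∨ y = 0 := by
  have : CharP F 2 := charP_of_card_eq_prime_pow hcard
  obtain ⟨c, hc⟩ := hquad
  have hP0 : P 0 = 0 := by simp [hc]
  intro x y
  exact eq_zero_or_eq_zero_of_planar hP0 fun a ha => (hplanar a ha).injective

/-- The presemifield product x*y = xy + P(x+y) + P(x) + P(y) attached to a
quadratic planar function P has no zero divisors. -/
theorem stmt_17 (n : ℕ) (hn : 0 < n) (F : Type*) [Field F] [Fintype F]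
    (hcard : Fintype.card F = 2 ^ n) (P : F → F)
    (hquad : ∃ c : ℕ → ℕ → F, ∀ x : F,
      P x = ∑ i ∈ Finset.range n, ∑ j ∈ Finset.range n, c i j * x ^ (2 ^ i + 2 ^ j))
    (hplanar : ∀ a : F, a ≠ 0 →
      Function.Bijective (fun x : F => P (x + a) + P x + a * x)) :
    ∀ x y : F, x * y + P (x + y) + P x + P y = 0 → x = 0 ∨ y = 0 :=
  stmt_17_general n F hcard P hquad hplanar
end

section
/- Let q = 2^m with m even and ω ∈ F_{q^4} satisfying ω² + ω + 1 = 0 (so ω ∈ F_4 ⊆ F_q and ω^q = ω). Define L(x) = x + ω x^q + x^{q^2} + ω² x^{q^3} and M(x) = x + ω² x^q + x^{q^2} + ω x^{q^3} on F_{q^4}. Then M(L(x)) = x for all x ∈ F_{q^4}; i.e., M = L^{-1}. -/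
/-!
With `σ = (· ^ q)`, `L = 1 + ωσ + σ² + ω²σ³` and `M = 1 + ω²σ + σ² + ωσ³`. Since `σ` fixes
`ω ∈ 𝔽₄ ⊆ 𝔽_q`, these compose like polynomials in `σ` with coefficients in `𝔽₄`, and modulo
`σ⁴ = 1` and characteristic `2` the product `M L` collapses to `1` using `ω² + ω + 1 = 0`.
-/

theorem twisted_inverse_of_order_four {R : Type*} [CommRing R] (h2 : (2 : R) = 0)
    (σ : R →+* R) (hσ : ∀ y, σ (σ (σ (σ y))) = y) (ω : R) (hω : ω ^ 2 + ω + 1 = 0)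
    (hσω : σ ω = ω) (x : R) :
    let y := x + ω * σ x + σ (σ x) + ω ^ 2 * σ (σ (σ x))
    y + ω ^ 2 * σ y + σ (σ y) + ω * σ (σ (σ y)) = x := by
  simp only [map_add, map_mul, map_pow, hσω, hσ]
  linear_combination (x * (ω ^ 2 - ω + 1)) * hω +
    ((σ x + σ (σ (σ x))) * (ω + ω ^ 2) + σ (σ x) * (1 + ω ^ 3)) * h2

theorem pow_two_pow_eq_self_of_even {R : Type*} [CommRing R] {ω : R} (hω : ω ^ 2 + ω + 1 = 0)
    {m : ℕ} (hm : Even m) : ω ^ (2 ^ m) = ω := by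
  have hω3 : ω ^ 3 = 1 := by linear_combination (ω - 1) * hω
  obtain ⟨t, rfl⟩ := hm
  have hmod : 2 ^ (t + t) % 3 = 1 := by
    rw [← two_mul, pow_mul, Nat.pow_mod]
    norm_num
  rw [pow_eq_pow_mod _ hω3, hmod, pow_one]

theorem two_eq_zero_of_card_eq_two_pow {F : Type*} [Field F] [Fintype F] {n : ℕ}
    (hcard : Fintype.card F = 2 ^ n) : (2 : F) = 0 := by
  have h := FiniteField.cast_card_eq_zero F
  rw [hcard, Nat.cast_pow, Nat.cast_ofNat] at h
  exact (pow_eq_zero_iff'.mp h).1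

theorem stmt_18_general (m : ℕ) (hme : Even m) (F : Type*) [Field F] [Fintype F]
    (hcard : Fintype.card F = 2 ^ (4 * m)) (ω : F)
    (hω : ω ^ 2 + ω + 1 = 0) :
    ∀ x : F,
      (fun y : F => y + ω ^ 2 * y ^ (2 ^ m) + y ^ ((2 ^ m) ^ 2) + ω * y ^ ((2 ^ m) ^ 3))
        ((fun y : F => y + ω * y ^ (2 ^ m) + y ^ ((2 ^ m) ^ 2) + ω ^ 2 * y ^ ((2 ^ m) ^ 3)) x)
        = x := by
  intro x
  have h2 := two_eq_zero_of_card_eq_two_pow hcard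
  have : CharP F 2 := (CharP.charP_iff_prime_eq_zero Nat.prime_two).2 h2
  set σ := iterateFrobenius F 2 m
  have hσ : ∀ y, σ y = y ^ (2 ^ m) := iterateFrobenius_def 2 m
  have hσ2 : ∀ y : F, y ^ ((2 ^ m) ^ 2) = σ (σ y) := fun y => by
    rw [hσ, hσ, ← pow_mul y, sq]
  have hσ3 : ∀ y : F, y ^ ((2 ^ m) ^ 3) = σ (σ (σ y)) := fun y => by
    rw [hσ, ← hσ2, ← pow_mul y, pow_succ]
  have hσ4 : ∀ y, σ (σ (σ (σ y))) = y := fun y => by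
    rw [← hσ3, hσ, ← pow_mul y, ← pow_succ', ← pow_mul 2, mul_comm, ← hcard,
      FiniteField.pow_card]
  simp only [hσ2, hσ3, ← hσ]
  exact twisted_inverse_of_order_four h2 σ hσ4 ω hω
    ((hσ ω).trans (pow_two_pow_eq_self_of_even hω hme)) x

/-- M(x) = x + ω²x^q + x^{q²} + ωx^{q³} is the inverse of
L(x) = x + ωx^q + x^{q²} + ω²x^{q³} on F_{q^4}, when m is even and ω²+ω+1 = 0. -/
theorem stmt_18 (m : ℕ) (hm : 0 < m) (hme : Even m) (F : Type*) [Field F] [Fintype F]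
    (hcard : Fintype.card F = 2 ^ (4 * m)) (ω : F)
    (hω : ω ^ 2 + ω + 1 = 0) :
    ∀ x : F,
      (fun y : F => y + ω ^ 2 * y ^ (2 ^ m) + y ^ ((2 ^ m) ^ 2) + ω * y ^ ((2 ^ m) ^ 3))
        ((fun y : F => y + ω * y ^ (2 ^ m) + y ^ ((2 ^ m) ^ 2) + ω ^ 2 * y ^ ((2 ^ m) ^ 3)) x)
        = x :=
  stmt_18_general m hme F hcard ω hω
end

section
/- Let q = 2^m with m even, ω ∈ F_q with ω² + ω + 1 = 0. Define on F_{q^4} the product x ∘ y = xy + x^q(ω²y^q + ωy^{q^2} + y^{q^3}) + x^{q^2}(ωy^q + y^{q^2} + ω²y^{q^3}) + x^{q^3}(y^q + ω²y^{q^2} + ωy^{q^3}). Then ∘ is associative: α ∘ (x ∘ y) = (α ∘ x) ∘ y for all α, x, y ∈ F_{q^4}. -/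
/-!
Write `σ` for the Frobenius `x ↦ x ^ q`, so that `σ ^ 4 = 1` on `F_{q^4}` and `σ ω = ω`. The
coefficient matrix of `∘` is `ω u uᵀ` on the `σ, σ², σ³` block, with `u = (ω², ω, 1)`, so
`x ∘ y = x y + ω S(x) S(y)` with `S = ω² σ + ω σ² + σ³`. In characteristic `2` the additive map
`R = 1 + S` then satisfies `R (x ∘ y) = R x * R y`, and it is injective because
`ω² R + ω σ R = 1`. Hence `R` transports `∘` into the multiplication of the field, which is
associative.
-/

/-- The semifield multiplication derived from H(x) = ωx^{q+1} + x^{q²+1} + ω²x^{q³+1}. -/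
def circ (q : ℕ) {F : Type*} [Field F] (ω : F) (x y : F) : F :=
  x * y + x ^ q * (ω ^ 2 * y ^ q + ω * y ^ q ^ 2 + y ^ q ^ 3) +
    x ^ q ^ 2 * (ω * y ^ q + y ^ q ^ 2 + ω ^ 2 * y ^ q ^ 3) +
    x ^ q ^ 3 * (y ^ q + ω ^ 2 * y ^ q ^ 2 + ω * y ^ q ^ 3)

section TwistedMul

variable {F : Type*} [CommRing F] (f : F →+* F) (ω : F)

def frobTwist (x : F) : F :=
  ω ^ 2 * f x + ω * f (f x) + f (f (f x))

def frobResolvent (x : F) : F :=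
  x + frobTwist f ω x

def twistedMul (x y : F) : F :=
  x * y + ω * frobTwist f ω x * frobTwist f ω y

variable {f ω} [CharP F 2] (hω : ω ^ 2 + ω + 1 = 0) (hfω : f ω = ω)
  (hf4 : ∀ z, f (f (f (f z))) = z)
include hω hfω hf4

theorem frobResolvent_twistedMul (x y : F) :
    frobResolvent f ω (twistedMul f ω x y) = frobResolvent f ω x * frobResolvent f ω y := by
  simp only [frobResolvent, twistedMul, frobTwist, map_add, map_mul, map_pow, hfω, hf4]
  grind

theorem frobResolvent_leftInverse :
    Function.LeftInverse (fun z => ω ^ 2 * z + ω * f z) (frobResolvent f ω) := fun x => by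
  simp only [frobResolvent, frobTwist, map_add, map_mul, map_pow, hfω, hf4]
  grind

theorem twistedMul_assoc (a x y : F) :
    twistedMul f ω a (twistedMul f ω x y) = twistedMul f ω (twistedMul f ω a x) y :=
  (frobResolvent_leftInverse hω hfω hf4).injective <| by
    simp only [frobResolvent_twistedMul hω hfω hf4, mul_assoc]

end TwistedMul

theorem circ_eq_twistedMul {F : Type*} [Field F] {f : F →+* F} {ω : F} {q : ℕ}
    (hf : ∀ z, f z = z ^ q) (hω : ω ^ 2 + ω + 1 = 0) (x y : F) :
    circ q ω x y = twistedMul f ω x y := by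
  have hpow (k : ℕ) (z : F) : z ^ q ^ (k + 1) = f (z ^ q ^ k) := by
    rw [hf, pow_succ, pow_mul]
  simp only [circ, twistedMul, frobTwist, hpow 2, hpow 1, pow_one, ← hf]
  grind

theorem stmt_19_general (m : ℕ) (hme : Even m) (F : Type*) [Field F] [Fintype F]
    (hcard : Fintype.card F = 2 ^ (4 * m)) (ω : F)
    (hω : ω ^ 2 + ω + 1 = 0) :
    ∀ α x y : F, circ (2 ^ m) ω α (circ (2 ^ m) ω x y) =
      circ (2 ^ m) ω (circ (2 ^ m) ω α x) y := by
  intro α x y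
  have : Fact (Nat.Prime 2) := ⟨Nat.prime_two⟩
  have := charP_of_card_eq_prime_pow hcard
  set f := iterateFrobenius F 2 m
  have hf4 (z : F) : f (f (f (f z))) = z := by
    change f^[4] z = z
    rw [← iterateFrobenius_mul_apply, iterateFrobenius_def, mul_comm, ← hcard,
      FiniteField.pow_card]
  have hfω : f ω = ω := by
    have hω3 : ω ^ 3 = 1 := by linear_combination (ω - 1) * hω
    obtain ⟨k, rfl⟩ := hme
    rw [iterateFrobenius_def, pow_eq_pow_mod _ hω3, ← two_mul, pow_mul, Nat.pow_mod]
    norm_num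
  simpa only [circ_eq_twistedMul (f := f) (fun _ => rfl) hω] using
    twistedMul_assoc hω hfω hf4 α x y

/-- The product ∘ on F_{q^4} is associative (m even, ω² + ω + 1 = 0). -/
theorem stmt_19 (m : ℕ) (hm : 0 < m) (hme : Even m) (F : Type*) [Field F] [Fintype F]
    (hcard : Fintype.card F = 2 ^ (4 * m)) (ω : F)
    (hω : ω ^ 2 + ω + 1 = 0) :
    ∀ α x y : F, circ (2 ^ m) ω α (circ (2 ^ m) ω x y) =
      circ (2 ^ m) ω (circ (2 ^ m) ω α x) y :=
  stmt_19_general m hme F hcard ω hω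
end
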